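/- Let m, n ≥ 1, let G = G_{m×n} be the grid graph, let d = gcd(m+1, n+1), and let v = (a,b) be a vertex of G with d ∤ a and d ∤ b. Then there exists an even kernel of G containing v. -/

import Mathlib

/-- P-positions of undirected edge geography on the edge set `F` with root `v`:
every move (removing an edge `s(v,w) ∈ F` and moving the root to `w`)
leads to a position that is not a P-position. -/
def UegPPos {V : Type} [DecidableEq V] (F : Finset (Sym2 V)) (v : V) : Prop :=
  ∀ w : V, ∀ h : s(v, w) ∈ F, ¬ UegPPos (F.erase s(v, w)) w
termination_by F.card
decreasing_by exact Finset.card_erase_lt_of_mem h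

/-- N-positions of undirected edge geography: some move leads to a P-position. -/
def UegNPos {V : Type} [DecidableEq V] (F : Finset (Sym2 V)) (v : V) : Prop :=
  ∃ w : V, ∃ _ : s(v, w) ∈ F, UegPPos (F.erase s(v, w)) w

/-- The grid graph `G_{m×n}`: the vertex `(i, j)` of the grid (with `1 ≤ i ≤ m`,
`1 ≤ j ≤ n`) is encoded as the pair `(⟨i-1, _⟩, ⟨j-1, _⟩) : Fin m × Fin n`;
two vertices `(i,j)` and `(i',j')` are adjacent iff `|i-i'| + |j-j'| = 1`. -/
def gridGraph (m n : ℕ) : SimpleGraph (Fin m × Fin n) where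
  Adj p q := ((p.1.val : ℤ) - q.1.val).natAbs + ((p.2.val : ℤ) - q.2.val).natAbs = 1
  symm := by constructor; intro p q h; omega
  loopless := by constructor; intro p h; omega

instance (m n : ℕ) : DecidableRel (gridGraph m n).Adj := fun p q =>
  inferInstanceAs
    (Decidable (((p.1.val : ℤ) - q.1.val).natAbs + ((p.2.val : ℤ) - q.2.val).natAbs = 1))

/-- An even kernel of a simple graph: a nonempty independent set `S` such that every
vertex not in `S` has an even number of neighbors in `S`. -/
def IsEvenKernel {V : Type} (G : SimpleGraph V) (S : Set V) : Prop :=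
  S.Nonempty ∧ (∀ u ∈ S, ∀ w ∈ S, ¬ G.Adj u w) ∧
    ∀ u, u ∉ S → Even {w | w ∈ S ∧ G.Adj u w}.ncard

/-!
Put the grid vertex `(i, j)` at the lattice point `(i, j) ∈ ℤ²`, write `(a, b)` for `v`, and let
`P t` say `t ≡ ±(a + b) (mod 2d)`. The kernel is the set `S` of points lying on exactly one of the
lines `x + y = t`, `x - y = t` with `P t`. The four lattice neighbours of `(x, y)` lie in `S`
according to `A ⊕ C`, `B ⊕ D`, `A ⊕ D`, `B ⊕ C`, where `A, B = P (x + y ∓ 1)` and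
`C, D = P (x - y ∓ 1)`, so their number is even. `P` is invariant under reflection in every
multiple of `d`, in particular in `0`, `m + 1` and `n + 1`, so `S` misses the lines just outside
the grid, and a grid vertex has as many neighbours in `S` as its lattice point. All of `S` has
`x + y ≡ a + b (mod 2)`, so `S` is independent, and `d ∤ a`, `d ∤ b` put `(a, b)` in `S`.
-/

open Finset

def latticeNeighbors (z : ℤ × ℤ) : Finset (ℤ × ℤ) :=
  {(z.1 - 1, z.2), (z.1 + 1, z.2), (z.1, z.2 - 1), (z.1, z.2 + 1)}

lemma mem_latticeNeighbors {z w : ℤ × ℤ} :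
    w ∈ latticeNeighbors z ↔ (w.1 - z.1).natAbs + (w.2 - z.2).natAbs = 1 := by
  obtain ⟨x, y⟩ := z
  obtain ⟨x', y'⟩ := w
  simp only [latticeNeighbors, mem_insert, mem_singleton, Prod.mk.injEq]
  omega

def gridCoord {m n : ℕ} (p : Fin m × Fin n) : ℤ × ℤ := ((p.1 : ℤ) + 1, (p.2 : ℤ) + 1)

lemma gridCoord_injective (m n : ℕ) :
    Function.Injective (gridCoord : Fin m × Fin n → ℤ × ℤ) := by
  rintro ⟨i, j⟩ ⟨i', j'⟩ h
  simp only [gridCoord, Prod.mk.injEq, add_left_inj, Nat.cast_inj, Fin.val_inj] at h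
  rw [h.1, h.2]

lemma mem_range_gridCoord {m n : ℕ} {z : ℤ × ℤ} :
    z ∈ Set.range (gridCoord : Fin m × Fin n → ℤ × ℤ) ↔
      1 ≤ z.1 ∧ z.1 ≤ m ∧ 1 ≤ z.2 ∧ z.2 ≤ n := by
  constructor
  · rintro ⟨⟨i, j⟩, rfl⟩
    simp only [gridCoord]
    omega
  · rintro ⟨h₁, h₂, h₃, h₄⟩
    refine ⟨(⟨(z.1 - 1).toNat, by omega⟩, ⟨(z.2 - 1).toNat, by omega⟩), ?_⟩
    ext <;> simp only [gridCoord] <;> omega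

lemma gridGraph_adj_iff {m n : ℕ} {p q : Fin m × Fin n} :
    (gridGraph m n).Adj p q ↔ gridCoord q ∈ latticeNeighbors (gridCoord p) := by
  rw [mem_latticeNeighbors]
  simp only [gridGraph, gridCoord]
  omega

lemma gridGraph_not_adj_of_modEq {m n : ℕ} {p q : Fin m × Fin n}
    (h : (gridCoord p).1 + (gridCoord p).2 ≡ (gridCoord q).1 + (gridCoord q).2 [ZMOD 2]) :
    ¬ (gridGraph m n).Adj p q := by
  rw [gridGraph_adj_iff, mem_latticeNeighbors]
  rw [Int.modEq_iff_dvd] at h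
  omega

lemma ncard_adj_preimage_gridCoord {m n : ℕ} {T : Set (ℤ × ℤ)}
    (hborder : ∀ z ∈ T, z.1 ≠ 0 ∧ z.1 ≠ m + 1 ∧ z.2 ≠ 0 ∧ z.2 ≠ n + 1) (u : Fin m × Fin n) :
    {w | w ∈ gridCoord ⁻¹' T ∧ (gridGraph m n).Adj u w}.ncard =
      {z | z ∈ latticeNeighbors (gridCoord u) ∧ z ∈ T}.ncard := by
  rw [← Set.ncard_image_of_injective _ (gridCoord_injective m n)]
  congr 1
  ext z
  simp only [Set.mem_image, Set.mem_ofPred_eq, Set.mem_preimage, gridGraph_adj_iff]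
  constructor
  · rintro ⟨w, ⟨hwT, hw⟩, rfl⟩
    exact ⟨hw, hwT⟩
  · rintro ⟨hz, hzT⟩
    obtain ⟨w, rfl⟩ : z ∈ Set.range (gridCoord : Fin m × Fin n → ℤ × ℤ) := by
      have hu := (mem_range_gridCoord (m := m) (n := n)).mp ⟨u, rfl⟩
      rw [mem_latticeNeighbors] at hz
      rw [mem_range_gridCoord]
      have := hborder z hzT
      omega
    exact ⟨w, ⟨hzT, hz⟩, rfl⟩

lemma isEvenKernel_preimage_gridCoord {m n : ℕ} {T : Set (ℤ × ℤ)} (c : ℤ)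
    (hborder : ∀ z ∈ T, z.1 ≠ 0 ∧ z.1 ≠ m + 1 ∧ z.2 ≠ 0 ∧ z.2 ≠ n + 1)
    (heven : ∀ z, Even {w | w ∈ latticeNeighbors z ∧ w ∈ T}.ncard)
    (hparity : ∀ z ∈ T, z.1 + z.2 ≡ c [ZMOD 2])
    (hne : (gridCoord ⁻¹' T : Set (Fin m × Fin n)).Nonempty) :
    IsEvenKernel (gridGraph m n) (gridCoord ⁻¹' T) := by
  refine ⟨hne, fun u hu w hw => gridGraph_not_adj_of_modEq ?_, fun u _ => ?_⟩
  · exact (hparity _ hu).trans (hparity _ hw).symm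
  · rw [ncard_adj_preimage_gridCoord hborder]
    exact heven _

def diagonalXor (P : ℤ → Prop) : Set (ℤ × ℤ) := {z | Xor (P (z.1 + z.2)) (P (z.1 - z.2))}

lemma even_ncard_latticeNeighbors_diagonalXor (P : ℤ → Prop) (z : ℤ × ℤ) :
    Even {w | w ∈ latticeNeighbors z ∧ w ∈ diagonalXor P}.ncard := by
  classical
  obtain ⟨x, y⟩ := z
  rw [← coe_filter, Set.ncard_coe_finset, card_filter, latticeNeighbors,
    sum_insert (by simp; omega), sum_insert (by simp), sum_insert (by simp; omega),
    sum_singleton]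
  simp only [diagonalXor, Set.mem_ofPred_eq, show x - 1 + y = x + y - 1 by ring,
    show x - 1 - y = x - y - 1 by ring, show x + 1 + y = x + y + 1 by ring,
    show x + 1 - y = x - y + 1 by ring, show x + (y - 1) = x + y - 1 by ring,
    show x - (y - 1) = x - y + 1 by ring, show x + (y + 1) = x + y + 1 by ring,
    show x - (y + 1) = x - y - 1 by ring]
  by_cases P (x + y - 1) <;> by_cases P (x + y + 1) <;> by_cases P (x - y - 1) <;>
    by_cases P (x - y + 1) <;> simp [Xor, Nat.even_iff, *]

lemma ne_of_mem_diagonalXor {P : ℤ → Prop} (hP : ∀ t, P (-t) ↔ P t) {L : ℤ}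
    (hL : ∀ t, P (L + t) ↔ P (L - t)) {z : ℤ × ℤ} (hz : z ∈ diagonalXor P) :
    z.1 ≠ L ∧ z.2 ≠ L := by
  obtain ⟨x, y⟩ := z
  simp only [diagonalXor, Set.mem_ofPred_eq] at hz
  refine ⟨fun (hx : x = L) => ?_, fun (hy : y = L) => ?_⟩
  · rw [hx, hL, xor_self] at hz
    exact hz
  · have hsymm : P (x - L) ↔ P (x + L) := by rw [← hP, neg_sub, ← hL, add_comm]
    rw [hy, hsymm, xor_self] at hz
    exact hz

def ModEqPlusMinus (N c t : ℤ) : Prop := t ≡ c [ZMOD N] ∨ t ≡ -c [ZMOD N]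

lemma ModEqPlusMinus.congr {N c a b : ℤ} (h : a ≡ b [ZMOD N]) :
    ModEqPlusMinus N c a ↔ ModEqPlusMinus N c b :=
  ⟨Or.imp h.symm.trans h.symm.trans, Or.imp h.trans h.trans⟩

lemma modEqPlusMinus_neg {N c t : ℤ} : ModEqPlusMinus N c (-t) ↔ ModEqPlusMinus N c t := by
  conv_lhs => rw [ModEqPlusMinus, Int.neg_modEq_neg, ← neg_neg c, Int.neg_modEq_neg, neg_neg]
  exact or_comm

lemma modEqPlusMinus_reflect {N c L : ℤ} (hL : N ∣ 2 * L) (t : ℤ) :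
    ModEqPlusMinus N c (L + t) ↔ ModEqPlusMinus N c (L - t) := by
  have h : L + t ≡ -(L - t) [ZMOD N] := by
    rwa [Int.modEq_iff_dvd, show -(L - t) - (L + t) = -(2 * L) by ring, dvd_neg]
  rw [ModEqPlusMinus.congr h, modEqPlusMinus_neg]

lemma ModEqPlusMinus.modEq_two {N c t : ℤ} (hN : 2 ∣ N) (h : ModEqPlusMinus N c t) :
    t ≡ c [ZMOD 2] := by
  rcases h with h | h
  · exact h.of_dvd hN
  · exact (h.of_dvd hN).trans (Int.modEq_iff_dvd.mpr ⟨c, by ring⟩)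

lemma modEq_two_of_mem_diagonalXor {P : ℤ → Prop} {c : ℤ} (hP : ∀ t, P t → t ≡ c [ZMOD 2])
    {z : ℤ × ℤ} (hz : z ∈ diagonalXor P) : z.1 + z.2 ≡ c [ZMOD 2] := by
  rcases hz with ⟨h, -⟩ | ⟨h, -⟩
  · exact hP _ h
  · exact (Int.modEq_iff_dvd.mpr ⟨-z.2, by ring⟩).trans (hP _ h)

lemma mem_diagonalXor_modEqPlusMinus_add {d a b : ℤ} (ha : ¬ d ∣ a) (hb : ¬ d ∣ b) :
    (a, b) ∈ diagonalXor (ModEqPlusMinus (2 * d) (a + b)) := by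
  refine Or.inl ⟨Or.inl rfl, ?_⟩
  rintro (h | h) <;> rw [Int.modEq_iff_dvd] at h
  · rw [show a + b - (a - b) = 2 * b by ring] at h
    exact hb ((mul_dvd_mul_iff_left two_ne_zero).mp h)
  · rw [show -(a + b) - (a - b) = 2 * -a by ring] at h
    exact ha (dvd_neg.mp ((mul_dvd_mul_iff_left two_ne_zero).mp h))

theorem grid_exists_evenKernel_general (m n : ℕ)
    (d : ℕ) (hd : d = Nat.gcd (m + 1) (n + 1)) (v : Fin m × Fin n)
    (ha : ¬ d ∣ (v.1.val + 1)) (hb : ¬ d ∣ (v.2.val + 1)) :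
    ∃ S : Set (Fin m × Fin n), IsEvenKernel (gridGraph m n) S ∧ v ∈ S := by
  set P := ModEqPlusMinus (2 * d) ((gridCoord v).1 + (gridCoord v).2)
  have hv : gridCoord v ∈ diagonalXor P :=
    mem_diagonalXor_modEqPlusMinus_add (a := (v.1 : ℤ) + 1) (b := (v.2 : ℤ) + 1)
      (by exact_mod_cast ha) (by exact_mod_cast hb)
  have hborder (L : ℤ) (hL : (d : ℤ) ∣ L) {z : ℤ × ℤ} (hz : z ∈ diagonalXor P) :
      z.1 ≠ L ∧ z.2 ≠ L :=
    ne_of_mem_diagonalXor (fun _ => modEqPlusMinus_neg)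
      (modEqPlusMinus_reflect (mul_dvd_mul_left 2 hL)) hz
  have hdm : (d : ℤ) ∣ m + 1 := by exact_mod_cast hd ▸ Nat.gcd_dvd_left (m + 1) (n + 1)
  have hdn : (d : ℤ) ∣ n + 1 := by exact_mod_cast hd ▸ Nat.gcd_dvd_right (m + 1) (n + 1)
  refine ⟨gridCoord ⁻¹' diagonalXor P, isEvenKernel_preimage_gridCoord _ (fun z hz => ?_)
    (even_ncard_latticeNeighbors_diagonalXor P)
    (fun _ => modEq_two_of_mem_diagonalXor fun _ => ModEqPlusMinus.modEq_two (dvd_mul_right 2 _))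
    ⟨v, hv⟩, hv⟩
  exact ⟨(hborder 0 (dvd_zero _) hz).1, (hborder _ hdm hz).1, (hborder 0 (dvd_zero _) hz).2,
    (hborder _ hdn hz).2⟩

/-- For `m, n ≥ 1`, `d = gcd(m+1, n+1)` and a vertex `v = (a,b)` of the
grid graph `G_{m×n}` (with `a = v.1.val + 1`, `b = v.2.val + 1`) such that `d ∤ a` and
`d ∤ b`, there exists an even kernel of `G_{m×n}` containing `v`. -/
theorem grid_exists_evenKernel (m n : ℕ) (hm : 1 ≤ m) (hn : 1 ≤ n)
    (d : ℕ) (hd : d = Nat.gcd (m + 1) (n + 1)) (v : Fin m × Fin n)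
    (ha : ¬ d ∣ (v.1.val + 1)) (hb : ¬ d ∣ (v.2.val + 1)) :
    ∃ S : Set (Fin m × Fin n), IsEvenKernel (gridGraph m n) S ∧ v ∈ S :=
  grid_exists_evenKernel_general m n d hd v ha hb
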